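/- Let 2 ≤ r < s be integers with s ≥ 2r. Then the minimum order n_bb(r,s;4) of a balanced biregular graph of girth 4 with degrees r and s equals 4(s − r). -/

import Mathlib

open SimpleGraph Set

/-- The degree of a vertex, via the natural cardinality of its neighbor set. -/
noncomputable def deg {V : Type*} (G : SimpleGraph V) (v : V) : ℕ :=
  (G.neighborSet v).ncard

/-- Number of edges both of whose endpoints have degree `d`. -/
noncomputable def edgeCountDeg {V : Type*} (G : SimpleGraph V) (d : ℕ) : ℕ :=
  {e ∈ G.edgeSet | ∀ v ∈ e, deg G v = d}.ncard

/-- An `(r,s;g)`-balanced biregular graph: girth `g`, degree set exactly `{r, s}`,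
and equally many vertices of degree `r` as of degree `s`. -/
def IsBabi {V : Type*} (r s g : ℕ) (G : SimpleGraph V) : Prop :=
  G.girth = g ∧ (∀ v, deg G v = r ∨ deg G v = s) ∧
  (∃ v, deg G v = r) ∧ (∃ v, deg G v = s) ∧
  {v | deg G v = r}.ncard = {v | deg G v = s}.ncard

open Finset

/-!
Write `t = s - r`. For the lower bound, let `S` be the set of the `k` vertices of degree `s`; the
other `k` vertices have degree `r`, so at most `r k` edges leave `S` and the degrees inside `S` sum
to at least `k t`. The graph is triangle-free, so by Mantel's theorem that sum is at most `k² / 2`;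
hence `k ≥ 2 t` and the order `2 k` is at least `4 t`.

For the construction take two copies of the circulant bipartite graph in which leaf `i` of `Fin t`
is joined to hubs `i, …, i + r - 1`, which is `r`-regular as `r ≤ t`, and join all hubs of one copy
to all hubs of the other. Hubs have degree `t + r = s`, leaves degree `r`; the graph is bipartite
and contains a `4`-cycle among the hubs, so its girth is `4`.
-/

namespace SimpleGraph
variable {V : Type*} {G : SimpleGraph V}

theorem girth_eq_four_of_coloring_bool (col : G.Coloring Bool) {a b c d : V}
    (hab : G.Adj a b) (hbc : G.Adj b c) (hcd : G.Adj c d) (hda : G.Adj d a)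
    (hac : a ≠ c) (hbd : b ≠ d) : G.girth = 4 := by
  let w : G.Walk a a := .cons hab (.cons hbc (.cons hcd (.cons hda .nil)))
  have hw : w.IsCycle := by
    simp [w, Walk.cons_isCycle_iff, hab.ne, hbc.ne, hcd.ne, hda.ne, hab.ne', hda.ne', hac,
      hac.symm, hbd]
  have hle : G.egirth ≤ 4 := egirth_le_length hw
  have hge : 4 ≤ G.egirth := le_egirth.mpr fun u p hp ↦ by
    obtain ⟨k, hk⟩ : Even p.length := (col.even_length_iff_congr p).mpr Iff.rfl
    have := hp.three_le_length
    exact_mod_cast (by omega : 4 ≤ p.length)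
  simp [girth, le_antisymm hle hge]

theorem cliqueFree_three_of_three_lt_girth (h : 3 < G.girth) : G.CliqueFree 3 := by
  by_contra hG
  have hK3 : (completeGraph (Fin 3)).girth = 3 := girth_top (by simp)
  have := ((not_cliqueFree_iff_top_isContained 3).mp hG).girth_le
    (by rw [← girth_eq_zero, hK3]; decide)
  omega

-- Mantel's theorem for the subgraph induced on `s`.
theorem two_mul_sum_card_neighborFinset_inter_le_sq [Fintype V] [DecidableEq V]
    [DecidableRel G.Adj] (hG : G.CliqueFree 3) (s : Finset V) :
    2 * ∑ v ∈ s, #(G.neighborFinset v ∩ s) ≤ #s ^ 2 := by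
  have hdeg (v : (s : Set V)) : (G.induce s).degree v = #(G.neighborFinset v ∩ s) := by
    rw [← card_neighborFinset_eq_degree, ← card_map (.subtype _)]
    convert congrArg card (map_neighborFinset_induce (G := G) (s := (s : Set V)) v) using 3
    · ext; simp
    · simp
  have hsum : ∑ v ∈ s, #(G.neighborFinset v ∩ s) = 2 * #(G.induce s).edgeFinset := by
    rw [← sum_degrees_eq_twice_card_edges, ← Finset.sum_coe_sort s]
    exact Fintype.sum_congr _ _ fun v ↦ (hdeg v).symm
  have hmantel :=
    (hG.comap (Embedding.induce (s : Set V)).isContained).card_edgeFinset_le (r := 2)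
  simp only [coe_sort_coe, Fintype.card_coe] at hmantel
  have hchoose : (#s % 2).choose 2 = 0 := Nat.choose_eq_zero_of_lt (Nat.mod_lt _ two_pos)
  rw [hsum]
  omega

theorem two_mul_mul_card_le_of_cliqueFree_three [Fintype V] [DecidableEq V] [DecidableRel G.Adj]
    (hG : G.CliqueFree 3) {S : Finset V} {r s : ℕ} (hS : ∀ v ∈ S, s ≤ G.degree v)
    (hSc : ∀ v ∉ S, G.degree v ≤ r) : 2 * s * #S ≤ #S ^ 2 + 2 * r * #Sᶜ := by
  have hout : ∑ v ∈ S, #(G.neighborFinset v \ S) ≤ r * #Sᶜ := by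
    calc ∑ v ∈ S, #(G.neighborFinset v \ S) = ∑ v ∈ S, #(Sᶜ.bipartiteAbove G.Adj v) := by
          congr! 2 with v; ext w; simp [bipartiteAbove, and_comm]
      _ = ∑ w ∈ Sᶜ, #(S.bipartiteBelow G.Adj w) :=
          sum_card_bipartiteAbove_eq_sum_card_bipartiteBelow _
      _ ≤ ∑ w ∈ Sᶜ, G.degree w := sum_le_sum fun w _ ↦ by
          rw [← card_neighborFinset_eq_degree]
          exact card_le_card fun u hu ↦ by simp_all [bipartiteBelow, G.adj_comm]
      _ ≤ ∑ w ∈ Sᶜ, r := sum_le_sum fun w hw ↦ hSc w (mem_compl.mp hw)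
      _ = r * #Sᶜ := by rw [sum_const, smul_eq_mul, mul_comm]
  have hin := two_mul_sum_card_neighborFinset_inter_le_sq hG S
  have hdeg : s * #S ≤ ∑ v ∈ S, #(G.neighborFinset v ∩ S) + ∑ v ∈ S, #(G.neighborFinset v \ S) := by
    calc s * #S = ∑ v ∈ S, s := by rw [sum_const, smul_eq_mul, mul_comm]
      _ ≤ ∑ v ∈ S, G.degree v := sum_le_sum hS
      _ = _ := by
        rw [← sum_add_distrib]
        congr! 1 with v
        rw [card_inter_add_card_sdiff, card_neighborFinset_eq_degree]
  nlinarith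

end SimpleGraph

section
variable {V W : Type*} {G : SimpleGraph V} {H : SimpleGraph W}

theorem deg_eq_degree [Fintype V] [DecidableRel G.Adj] (v : V) : deg G v = G.degree v := by
  rw [deg, ← card_neighborSet_eq_degree, ← Nat.card_eq_fintype_card, Nat.card_coe_set_eq]

theorem SimpleGraph.Iso.deg_apply (e : G ≃g H) (v : V) : deg H (e v) = deg G v := by
  rw [deg, ← e.image_neighborSet, ncard_image_of_injective _ e.injective, deg]

theorem SimpleGraph.Iso.isBabi {r s g : ℕ} (e : G ≃g H) (h : IsBabi r s g G) :
    IsBabi r s g H := by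
  obtain ⟨hg, hdeg, ⟨u, hu⟩, ⟨v, hv⟩, hbal⟩ := h
  have hclass (d : ℕ) : {w | deg H w = d} = e '' {v | deg G v = d} := by
    ext w
    obtain ⟨v, rfl⟩ := e.surjective w
    simp [e.deg_apply]
  refine ⟨e.girth_eq ▸ hg, fun w ↦ ?_, ⟨e u, e.deg_apply u ▸ hu⟩, ⟨e v, e.deg_apply v ▸ hv⟩,
    ?_⟩
  · obtain ⟨v, rfl⟩ := e.surjective w
    simpa [e.deg_apply] using hdeg v
  · rw [hclass, hclass, ncard_image_of_injective _ e.injective,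
      ncard_image_of_injective _ e.injective, hbal]

theorem IsBabi.four_mul_sub_le_card [Fintype V] {r s : ℕ} (hrs : r ≠ s) (h : IsBabi r s 4 G) :
    4 * (s - r) ≤ Fintype.card V := by
  classical
  obtain ⟨hg, hdeg, -, ⟨v, hv⟩, hbal⟩ := h
  simp_rw [deg_eq_degree] at hdeg hv hbal
  set S : Finset V := {v | G.degree v = s}
  have hSc : Sᶜ = ({v | G.degree v = r} : Finset V) := by
    ext w
    have := hdeg w
    simp only [S, Finset.mem_compl, Finset.mem_filter, Finset.mem_univ, true_and]
    omega
  have hcard : #Sᶜ = #S := by simpa [hSc, Set.ncard_eq_toFinset_card'] using hbal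
  have hpos : 0 < #S := card_pos.mpr ⟨v, by simp [S, hv]⟩
  have hsplit := two_mul_mul_card_le_of_cliqueFree_three
    (cliqueFree_three_of_three_lt_girth (by omega)) (S := S) (r := r) (s := s)
    (fun w hw ↦ (Finset.mem_filter.mp hw).2.ge)
    (fun w hw ↦ (Finset.mem_filter.mp (hSc ▸ Finset.mem_compl.mpr hw)).2.le)
  rw [hcard] at hsplit
  have : 2 * s ≤ #S + 2 * r := by nlinarith
  rw [← card_add_card_compl S, hcard]
  omega

end

theorem Fin.card_filter_sub_val_lt {r t : ℕ} [NeZero t] (hr : r ≤ t) (j : Fin t) :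
    #{i : Fin t | (j - i).val < r} = r := by
  calc #{i : Fin t | (j - i).val < r} = #{i : Fin t | i.val < r} :=
        card_equiv (Equiv.subLeft j) (by simp)
    _ = r := by simp [Fin.card_filter_val_lt, hr]

theorem Fin.card_filter_val_sub_lt {r t : ℕ} [NeZero t] (hr : r ≤ t) (i : Fin t) :
    #{j : Fin t | (j - i).val < r} = r := by
  calc #{j : Fin t | (j - i).val < r} = #{i : Fin t | i.val < r} :=
        card_equiv (Equiv.subRight i) (by simp)
    _ = r := by simp [Fin.card_filter_val_lt, hr]

-- `(b, true, j)` is hub `j` and `(b, false, i)` is leaf `i` of copy `b`.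
def hubLeafGraph (r t : ℕ) : SimpleGraph (Bool × Bool × Fin t) where
  Adj
    | (b, true, _), (b', true, _) => b ≠ b'
    | (b, false, i), (b', true, j) => b = b' ∧ (j - i).val < r
    | (b, true, j), (b', false, i) => b = b' ∧ (j - i).val < r
    | (_, false, _), (_, false, _) => False
  symm := ⟨by rintro ⟨b, _ | _, i⟩ ⟨b', _ | _, j⟩ h <;> simp_all [eq_comm]⟩
  loopless := ⟨by rintro ⟨b, _ | _, i⟩ h <;> simp_all⟩

namespace hubLeafGraph
variable {r t : ℕ}

instance : DecidableRel (hubLeafGraph r t).Adj := by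
  rintro ⟨b, _ | _, i⟩ ⟨b', _ | _, j⟩ <;> simp only [hubLeafGraph] <;> infer_instance

lemma degree_hub [NeZero t] (hr : r ≤ t) (b : Bool) (j : Fin t) :
    (hubLeafGraph r t).degree (b, true, j) = t + r := by
  rw [← card_neighborFinset_eq_degree, neighborFinset_eq_filter, card_filter,
    Fintype.sum_prod_type, Fintype.sum_bool]
  cases b <;>
    simp [hubLeafGraph, Fintype.sum_prod_type, Fin.card_filter_sub_val_lt hr, add_comm]

lemma degree_leaf [NeZero t] (hr : r ≤ t) (b : Bool) (i : Fin t) :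
    (hubLeafGraph r t).degree (b, false, i) = r := by
  rw [← card_neighborFinset_eq_degree, neighborFinset_eq_filter, card_filter,
    Fintype.sum_prod_type, Fintype.sum_bool]
  cases b <;>
    simp [hubLeafGraph, Fintype.sum_prod_type, Fin.card_filter_val_sub_lt hr, add_comm]

def coloring : (hubLeafGraph r t).Coloring Bool :=
  Coloring.mk (fun v ↦ xor v.1 v.2.1) <| by
    rintro ⟨b, _ | _, i⟩ ⟨b', _ | _, j⟩ h <;> cases b <;> cases b' <;> simp_all [hubLeafGraph]

lemma girth_eq_four (ht : 2 ≤ t) : (hubLeafGraph r t).girth = 4 := by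
  let i : Fin t := ⟨0, by omega⟩
  let j : Fin t := ⟨1, by omega⟩
  have hij : i ≠ j := by simp [i, j]
  exact girth_eq_four_of_coloring_bool coloring (a := (false, true, i)) (b := (true, true, i))
    (c := (false, true, j)) (d := (true, true, j)) (by simp [hubLeafGraph])
    (by simp [hubLeafGraph]) (by simp [hubLeafGraph]) (by simp [hubLeafGraph])
    (by simp [hij]) (by simp [hij])

theorem isBabi (hr : 2 ≤ r) (hrt : r ≤ t) : IsBabi r (t + r) 4 (hubLeafGraph r t) := by
  have : NeZero t := ⟨by omega⟩
  have hdeg (v) : deg (hubLeafGraph r t) v = if v.2.1 then t + r else r := by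
    obtain ⟨b, _ | _, i⟩ := v <;> simp [deg_eq_degree, degree_hub, degree_leaf, hrt]
  refine ⟨girth_eq_four (by omega), fun v ↦ ?_, ⟨(false, false, 0), by simp [hdeg]⟩,
    ⟨(false, true, 0), by simp [hdeg]⟩, ?_⟩
  · rw [hdeg]
    split <;> simp
  · have hflip : {v | deg (hubLeafGraph r t) v = r} =
        (fun v ↦ (v.1, !v.2.1, v.2.2)) '' {v | deg (hubLeafGraph r t) v = t + r} := by
      ext ⟨b, h, i⟩
      cases h <;> simp [hdeg]
    rw [hflip, ncard_image_of_injective]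
    rintro ⟨b, h, i⟩ ⟨b', h', i'⟩
    simp

end hubLeafGraph

theorem stmt_12_general (r s : ℕ) (hr : 2 ≤ r) (h2r : 2 * r ≤ s) :
    (∃ G : SimpleGraph (Fin (4 * (s - r))), IsBabi r s 4 G) ∧
    (∀ (n : ℕ) (G : SimpleGraph (Fin n)), IsBabi r s 4 G → 4 * (s - r) ≤ n) := by
  refine ⟨?_, fun n G hG ↦ ?_⟩
  · have e : Bool × Bool × Fin (s - r) ≃ Fin (4 * (s - r)) :=
      Fintype.equivFinOfCardEq (by simp; ring)
    refine ⟨(hubLeafGraph r (s - r)).map e.toEmbedding, (Iso.map e _).isBabi ?_⟩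
    simpa [Nat.sub_add_cancel (by omega : r ≤ s)] using
      hubLeafGraph.isBabi hr (by omega : r ≤ s - r)
  · simpa using hG.four_mul_sub_le_card (by omega)

/-- `n_bb(r,s;4) = 4(s − r)` when `s ≥ 2r`. -/
theorem stmt_12 (r s : ℕ) (hr : 2 ≤ r) (hrs : r < s) (h2r : 2 * r ≤ s) :
    (∃ G : SimpleGraph (Fin (4 * (s - r))), IsBabi r s 4 G) ∧
    (∀ (n : ℕ) (G : SimpleGraph (Fin n)), IsBabi r s 4 G → 4 * (s - r) ≤ n) :=
  stmt_12_general r s hr h2r
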